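/- arXiv:2103.04089 — 12 statements merged into one kernel-verified Lean document; each statement's English description precedes it below -/
import Mathlib

section
/- Let V be a vector space over a field k, let φ be a finite potent endomorphism of V with AST-decomposition V = W_φ ⊕ U_φ (where W_φ is finite-dimensional, φ-invariant, φ restricts to an automorphism of W_φ, U_φ is φ-invariant and φ restricts to a nilpotent endomorphism of U_φ), and let L ⊆ V be a φ-invariant subspace. If φ restricted to L is an automorphism of L, then L is finite-dimensional and L ⊆ W_φ. -/
/-!
If `φ` maps `L` onto itself then `L = φⁿ(L) ⊆ φⁿ(V)` for every `n`. Taking `n` with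
`φⁿ = 0` on `U`, we get `φⁿ(V) = φⁿ(W) + φⁿ(U) = φⁿ(W) ⊆ W`, so `L ⊆ W`, and `L` is
finite-dimensional because `W` is.
-/

namespace Module.End

variable {R M : Type*} [Semiring R] [AddCommMonoid M] [Module R M]

theorem le_range_pow_of_surjective_restrict {f : End R M} {L : Submodule R M}
    (hL : ∀ x ∈ L, f x ∈ L) (hsurj : Function.Surjective (f.restrict hL)) (n : ℕ) :
    L ≤ LinearMap.range (f ^ n) := by
  intro x hx
  obtain ⟨y, hy⟩ := (hsurj.iterate n : Function.Surjective (f.restrict hL)^[n]) ⟨x, hx⟩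
  rw [← coe_pow, pow_restrict] at hy
  exact ⟨y, congr_arg Subtype.val hy⟩

theorem pow_apply_eq_zero_of_restrict_pow_eq_zero {f : End R M} {U : Submodule R M}
    (hU : ∀ x ∈ U, f x ∈ U) {n : ℕ} (hn : f.restrict hU ^ n = 0) {u : M} (hu : u ∈ U) :
    (f ^ n) u = 0 := by
  have := congr_arg Subtype.val (LinearMap.congr_fun hn ⟨u, hu⟩)
  rwa [pow_restrict, LinearMap.restrict_apply] at this

theorem range_pow_le_of_sup_eq_top {f : End R M} {W U : Submodule R M} (hWU : W ⊔ U = ⊤)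
    (hW : ∀ x ∈ W, f x ∈ W) (hU : ∀ x ∈ U, f x ∈ U) {n : ℕ} (hn : f.restrict hU ^ n = 0) :
    LinearMap.range (f ^ n) ≤ W := by
  rw [LinearMap.range_eq_map, ← hWU, Submodule.map_sup, sup_le_iff, Submodule.map_le_iff_le_comap]
  refine ⟨fun w hw ↦ pow_apply_mem_of_forall_mem n hW w hw, ?_⟩
  rintro _ ⟨u, hu, rfl⟩
  rw [pow_apply_eq_zero_of_restrict_pow_eq_zero hU hn hu]
  exact W.zero_mem

end Module.End

theorem ast_invariant_auto_sub_general {k V : Type*} [Field k] [AddCommGroup V] [Module k V]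
    (φ : V →ₗ[k] V)
    (W U : Submodule k V) (hWU : IsCompl W U) [FiniteDimensional k W]
    (hW : ∀ x ∈ W, φ x ∈ W) (hU : ∀ x ∈ U, φ x ∈ U)
    (hUn : IsNilpotent (φ.restrict hU))
    (L : Submodule k V) (hL : ∀ x ∈ L, φ x ∈ L)
    (hLa : Function.Bijective (φ.restrict hL)) :
    FiniteDimensional k L ∧ L ≤ W := by
  obtain ⟨n, hn⟩ := hUn
  have hLW : L ≤ W :=
    (Module.End.le_range_pow_of_surjective_restrict hL hLa.2 n).trans
      (Module.End.range_pow_le_of_sup_eq_top hWU.sup_eq_top hW hU hn)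
  exact ⟨Submodule.finiteDimensional_of_le hLW, hLW⟩

/-- Lemma: if `φ` is finite potent with AST-decomposition `V = W ⊕ U` and `L` is a
`φ`-invariant subspace on which `φ` restricts to an automorphism, then `L` is
finite-dimensional and `L ⊆ W`. -/
theorem ast_invariant_auto_sub {k V : Type*} [Field k] [AddCommGroup V] [Module k V]
    (φ : V →ₗ[k] V)
    (hfp : ∃ n : ℕ, FiniteDimensional k (LinearMap.range (φ ^ n)))
    (W U : Submodule k V) (hWU : IsCompl W U) [FiniteDimensional k W]
    (hW : ∀ x ∈ W, φ x ∈ W) (hU : ∀ x ∈ U, φ x ∈ U)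
    (hWa : Function.Bijective (φ.restrict hW))
    (hUn : IsNilpotent (φ.restrict hU))
    (L : Submodule k V) (hL : ∀ x ∈ L, φ x ∈ L)
    (hLa : Function.Bijective (φ.restrict hL)) :
    FiniteDimensional k L ∧ L ≤ W :=
  ast_invariant_auto_sub_general φ W U hWU hW hU hUn L hL hLa
end

section
/- Let V be a vector space over a field k, let φ be a finite potent endomorphism of V with AST-decomposition V = W_φ ⊕ U_φ, and let L ⊆ V be a φ-invariant subspace. If φ restricted to L is nilpotent, then L ⊆ U_φ. -/
/-! A vector killed by a power of `φ` has no component in `W`: applying that power to the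
decomposition `x = w + u` puts `φⁿ w = -φⁿ u` in `W ⊓ U = ⊥`, and `φ` is injective on `W`. -/

open LinearMap

namespace Module.End

variable {R M : Type*} [Ring R] [AddCommGroup M] [Module R M]

theorem exists_le_ker_pow_of_isNilpotent_restrict {f : End R M} {p : Submodule R M}
    (hp : ∀ x ∈ p, f x ∈ p) (hf : IsNilpotent (f.restrict hp)) :
    ∃ n : ℕ, p ≤ ker (f ^ n) := by
  obtain ⟨n, hn⟩ := hf
  refine ⟨n, fun x hx => ?_⟩
  have := congrArg Subtype.val (LinearMap.congr_fun hn ⟨x, hx⟩)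
  rwa [pow_restrict, restrict_apply] at this

theorem disjoint_ker_pow_of_injective_restrict {f : End R M} {p : Submodule R M}
    (hp : ∀ x ∈ p, f x ∈ p) (hf : Function.Injective (f.restrict hp)) (n : ℕ) :
    Disjoint p (ker (f ^ n)) := by
  have hfn : Function.Injective ((f.restrict hp) ^ n) := by
    rw [coe_pow]
    exact hf.iterate n
  rwa [pow_restrict, injective_restrict_iff] at hfn

theorem ker_le_of_isCompl {f : End R M} {p q : Submodule R M} (hpq : IsCompl p q)
    (hp : ∀ x ∈ p, f x ∈ p) (hq : ∀ x ∈ q, f x ∈ q) (hf : Disjoint p (ker f)) :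
    ker f ≤ q := by
  intro x hx
  obtain ⟨y, hy, z, hz, rfl⟩ := Submodule.mem_sup.mp (hpq.sup_eq_top ▸ Submodule.mem_top : x ∈ p ⊔ q)
  have hfy : f y = -f z := eq_neg_of_add_eq_zero_left (by rw [← map_add]; exact hx)
  have hfy0 : f y = 0 :=
    (Submodule.disjoint_def.mp hpq.disjoint) _ (hp y hy) (hfy ▸ neg_mem (hq z hz))
  have hy0 : y = 0 := Submodule.disjoint_def.mp hf y hy hfy0
  simpa [hy0] using hz

end Module.End

open Module.End in
theorem ast_invariant_nilpotent_sub_general {k V : Type*} [Field k] [AddCommGroup V] [Module k V]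
    (φ : V →ₗ[k] V)
    (W U : Submodule k V) (hWU : IsCompl W U)
    (hW : ∀ x ∈ W, φ x ∈ W) (hU : ∀ x ∈ U, φ x ∈ U)
    (hWa : Function.Bijective (φ.restrict hW))
    (L : Submodule k V) (hL : ∀ x ∈ L, φ x ∈ L)
    (hLn : IsNilpotent (φ.restrict hL)) :
    L ≤ U := by
  obtain ⟨n, hLker⟩ := exists_le_ker_pow_of_isNilpotent_restrict hL hLn
  exact hLker.trans <| ker_le_of_isCompl hWU
    (fun x hx => pow_apply_mem_of_forall_mem n hW x hx)
    (fun x hx => pow_apply_mem_of_forall_mem n hU x hx)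
    (disjoint_ker_pow_of_injective_restrict hW hWa.injective n)

/-- Lemma: if `φ` is finite potent with AST-decomposition `V = W ⊕ U` and `L` is a
`φ`-invariant subspace on which `φ` restricts to a nilpotent endomorphism, then `L ⊆ U`. -/
theorem ast_invariant_nilpotent_sub {k V : Type*} [Field k] [AddCommGroup V] [Module k V]
    (φ : V →ₗ[k] V)
    (hfp : ∃ n : ℕ, FiniteDimensional k (LinearMap.range (φ ^ n)))
    (W U : Submodule k V) (hWU : IsCompl W U) [FiniteDimensional k W]
    (hW : ∀ x ∈ W, φ x ∈ W) (hU : ∀ x ∈ U, φ x ∈ U)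
    (hWa : Function.Bijective (φ.restrict hW))
    (hUn : IsNilpotent (φ.restrict hU))
    (L : Submodule k V) (hL : ∀ x ∈ L, φ x ∈ L)
    (hLn : IsNilpotent (φ.restrict hL)) :
    L ≤ U :=
  ast_invariant_nilpotent_sub_general φ W U hWU hW hU hWa L hL hLn
end

section
/- Let H be a Hilbert space and φ a bounded finite potent endomorphism of H with core-nilpotent decomposition φ = φ₁ + φ₂. Then φ₁ is bounded (and hence a bounded finite rank operator on H). -/
/-!
Since `φ` is bijective on `W` and nilpotent on `U`, the complement `U` is the kernel of some
power `φ ^ n`, hence closed because `φ` is bounded. The quotient `H ⧸ U ≅ W` is then a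
finite-dimensional Hausdorff space, and `φ₁`, which vanishes on `U`, factors through it; every
linear map out of such a space is continuous and has finite rank.
-/

namespace Module.End

variable {R M : Type*} [Semiring R] [AddCommMonoid M] [Module R M]

theorem ker_pow_eq_of_isCompl {f : Module.End R M} {W U : Submodule R M} (hWU : IsCompl W U)
    (hW : ∀ x ∈ W, f x ∈ W) (hU : ∀ x ∈ U, f x ∈ U) (hWinj : Function.Injective (f.restrict hW))
    {n : ℕ} (hn : f.restrict hU ^ n = 0) :
    LinearMap.ker (f ^ n) = U := by
  have hpowU : ∀ u ∈ U, (f ^ n) u = 0 := fun u hu => by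
    simpa [pow_restrict n hU] using congr(($hn ⟨u, hu⟩ : M))
  refine le_antisymm (fun x hx => ?_) hpowU
  obtain ⟨w, hw, u, hu, rfl⟩ :=
    Submodule.mem_sup.mp (hWU.sup_eq_top ▸ Submodule.mem_top : x ∈ W ⊔ U)
  have hfw : (f ^ n) w = 0 := by
    simpa [hpowU u hu] using (LinearMap.mem_ker.mp hx : (f ^ n) (w + u) = 0)
  have hw0 : (⟨w, hw⟩ : W) = 0 := by
    refine (coe_pow (f.restrict hW) n ▸ hWinj.iterate n) ?_
    rw [map_zero, pow_restrict n hW]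
    exact Subtype.ext hfw
  rwa [show w = 0 from congrArg Subtype.val hw0, zero_add]

end Module.End

namespace LinearMap

theorem finite_range_of_le_ker {R M N : Type*} [Ring R] [AddCommGroup M] [Module R M]
    [AddCommGroup N] [Module R N] {U : Submodule R M} [Module.Finite R (M ⧸ U)]
    {f : M →ₗ[R] N} (hf : U ≤ ker f) : Module.Finite R (range f) :=
  U.range_liftQ f hf ▸ Module.Finite.range _

theorem continuous_of_le_ker {𝕜 E F : Type*} [NontriviallyNormedField 𝕜] [CompleteSpace 𝕜]
    [AddCommGroup E] [TopologicalSpace E] [IsTopologicalAddGroup E] [Module 𝕜 E]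
    [ContinuousSMul 𝕜 E] [AddCommGroup F] [TopologicalSpace F] [IsTopologicalAddGroup F]
    [Module 𝕜 F] [ContinuousSMul 𝕜 F] {U : Submodule 𝕜 E} (hU : IsClosed (U : Set E))
    [FiniteDimensional 𝕜 (E ⧸ U)] {f : E →ₗ[𝕜] F} (hf : U ≤ ker f) : Continuous f := by
  have : IsClosed (U : Set E) := hU
  exact (U.liftQ f hf).continuous_of_finiteDimensional.comp U.continuous_mkQ

end LinearMap

theorem core_part_bounded_finite_rank_general {H : Type*} [NormedAddCommGroup H]
    [InnerProductSpace ℂ H]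
    (φ : H →ₗ[ℂ] H) (hb : Continuous ⇑φ)
    (W U : Submodule ℂ H) (hWU : IsCompl W U) [FiniteDimensional ℂ W]
    (hW : ∀ x ∈ W, φ x ∈ W) (hU : ∀ x ∈ U, φ x ∈ U)
    (hWa : Function.Bijective (φ.restrict hW))
    (hUn : IsNilpotent (φ.restrict hU))
    (φ₁ : H →ₗ[ℂ] H) (hφ₁U : ∀ v ∈ U, φ₁ v = 0) :
    Continuous ⇑φ₁ ∧ FiniteDimensional ℂ (LinearMap.range φ₁) := by
  obtain ⟨n, hn⟩ := hUn
  have hUclosed : IsClosed (U : Set H) := by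
    rw [← Module.End.ker_pow_eq_of_isCompl hWU hW hU hWa.injective hn]
    exact isClosed_singleton.preimage (Module.End.coe_pow φ n ▸ hb.iterate n)
  have : FiniteDimensional ℂ (H ⧸ U) :=
    (U.quotientEquivOfIsCompl W hWU.symm).symm.finiteDimensional
  have hker : U ≤ LinearMap.ker φ₁ := hφ₁U
  exact ⟨φ₁.continuous_of_le_ker hUclosed hker, φ₁.finite_range_of_le_ker hker⟩

/-- The core part `φ₁` of a bounded finite potent endomorphism `φ` (equal to `φ` on
`W_φ` and `0` on `U_φ`) is a bounded finite rank operator. -/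
theorem core_part_bounded_finite_rank {H : Type*} [NormedAddCommGroup H]
    [InnerProductSpace ℂ H] [CompleteSpace H]
    (φ : H →ₗ[ℂ] H) (hb : Continuous ⇑φ)
    (hfp : ∃ n : ℕ, FiniteDimensional ℂ (LinearMap.range (φ ^ n)))
    (W U : Submodule ℂ H) (hWU : IsCompl W U) [FiniteDimensional ℂ W]
    (hW : ∀ x ∈ W, φ x ∈ W) (hU : ∀ x ∈ U, φ x ∈ U)
    (hWa : Function.Bijective (φ.restrict hW))
    (hUn : IsNilpotent (φ.restrict hU))
    (φ₁ : H →ₗ[ℂ] H) (hφ₁W : ∀ v ∈ W, φ₁ v = φ v) (hφ₁U : ∀ v ∈ U, φ₁ v = 0) :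
    Continuous ⇑φ₁ ∧ FiniteDimensional ℂ (LinearMap.range φ₁) :=
  core_part_bounded_finite_rank_general φ hb W U hWU hW hU hWa hUn φ₁ hφ₁U
end

section
/- Let H be a Hilbert space and φ an endomorphism of H. Then φ is a bounded finite potent endomorphism if and only if H admits a decomposition H = W ⊕ U where W and U are closed φ-invariant subspaces, W is finite-dimensional, φ restricted to W is a homeomorphism of W, and φ restricted to U is a bounded nilpotent operator. -/
/-!
As `range (φ ^ n)` is finite-dimensional, the decreasing chain `range (φ ^ k)` stabilises at some
`m ≥ n`, and `W = range (φ ^ m)`, `U = ker (φ ^ m)` is a Fitting decomposition: `φ` maps `W` onto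
itself, hence bijectively since `W` is finite-dimensional, and `φ ^ m` kills `U`.
Conversely, a closed subspace with a finite-dimensional algebraic complement is topologically
complemented, so `φ` is continuous because its restrictions to `U` and to `W` are; and
`range (φ ^ k) ≤ W` as soon as `(φ|_U) ^ k = 0`.
-/

open LinearMap Submodule Module.End

namespace Module.End

section Ring

variable {R M : Type*} [Ring R] [AddCommGroup M] [Module R M] (f : End R M)

theorem range_pow_antitone : Antitone fun n : ℕ ↦ range (f ^ n) :=
  f.iterateRange.monotone

theorem mapsTo_range_pow (m : ℕ) : ∀ x ∈ range (f ^ m), f x ∈ range (f ^ m) := by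
  rintro _ ⟨y, rfl⟩
  exact ⟨f y, by rw [← mul_apply, ← pow_succ, pow_succ', mul_apply]⟩

theorem mapsTo_ker_pow (m : ℕ) : ∀ x ∈ ker (f ^ m), f x ∈ ker (f ^ m) := by
  intro x hx
  rw [mem_ker] at hx ⊢
  rw [← mul_apply, ← pow_succ, pow_succ', mul_apply, hx, map_zero]

theorem isNilpotent_restrict_ker_pow (m : ℕ) : IsNilpotent (f.restrict (f.mapsTo_ker_pow m)) := by
  refine ⟨m, LinearMap.ext fun x ↦ Subtype.ext ?_⟩
  rw [pow_restrict, coe_restrict_apply]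
  exact x.2

variable {f} {m : ℕ}

theorem range_pow_add_eq (hm : range (f ^ (m + 1)) = range (f ^ m)) (j : ℕ) :
    range (f ^ (m + j)) = range (f ^ m) := by
  induction j with
  | zero => rfl
  | succ j ih =>
    calc range (f ^ (m + (j + 1)))
        = (range (f ^ (m + j))).map f := by rw [← add_assoc, pow_succ', mul_eq_comp, range_comp]
      _ = (range (f ^ m)).map f := by rw [ih]
      _ = range (f ^ m) := by rw [← range_comp, ← mul_eq_comp, ← pow_succ', hm]

theorem surjective_restrict_range_pow (hm : range (f ^ (m + 1)) = range (f ^ m)) :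
    Function.Surjective (f.restrict (f.mapsTo_range_pow m)) := by
  rintro ⟨_, hw⟩
  rw [← hm] at hw
  obtain ⟨y, rfl⟩ := hw
  refine ⟨⟨(f ^ m) y, mem_range_self _ y⟩, Subtype.ext ?_⟩
  simp only [coe_restrict_apply, pow_succ', mul_apply]

theorem codisjoint_range_pow_ker_pow (hm : range (f ^ (m + 1)) = range (f ^ m)) :
    Codisjoint (range (f ^ m)) (ker (f ^ m)) := by
  refine codisjoint_iff_le_sup.2 fun x _ ↦ ?_
  obtain ⟨y, hy⟩ : (f ^ m) x ∈ range (f ^ (m + m)) := by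
    rw [range_pow_add_eq hm]; exact mem_range_self _ x
  refine mem_sup.2 ⟨(f ^ m) y, mem_range_self _ y, x - (f ^ m) y, ?_, add_sub_cancel _ _⟩
  rw [mem_ker, map_sub, ← mul_apply, ← pow_add, hy, sub_self]

theorem range_pow_le_of_codisjoint {W U : Submodule R M} (hWU : Codisjoint W U)
    (hW : ∀ x ∈ W, f x ∈ W) (hU : ∀ x ∈ U, f x ∈ U) {k : ℕ} (hk : f.restrict hU ^ k = 0) :
    range (f ^ k) ≤ W := by
  rw [range_eq_map, ← hWU.eq_top, Submodule.map_sup, sup_le_iff]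
  constructor
  · rintro _ ⟨x, hx, rfl⟩
    exact pow_apply_mem_of_forall_mem k hW x hx
  · rintro _ ⟨x, hx, rfl⟩
    have hx0 := congr_arg Subtype.val (LinearMap.congr_fun hk ⟨x, hx⟩)
    rw [pow_restrict, coe_restrict_apply] at hx0
    rw [hx0]
    exact W.zero_mem

end Ring

section Field

variable {K V : Type*} [Field K] [AddCommGroup V] [Module K V] {f : End K V}

theorem exists_range_pow_succ_eq {n : ℕ} (hn : FiniteDimensional K (range (f ^ n))) :
    ∃ m, n ≤ m ∧ range (f ^ (m + 1)) = range (f ^ m) := by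
  obtain ⟨m, hnm, hmin⟩ := exists_minimalFor_of_wellFoundedLT (n ≤ ·)
    (fun m ↦ Module.finrank K (range (f ^ m))) ⟨n, le_rfl⟩
  have : FiniteDimensional K (range (f ^ m)) := finiteDimensional_of_le (f.range_pow_antitone hnm)
  have hle := f.range_pow_antitone m.le_succ
  exact ⟨m, hnm, eq_of_le_of_finrank_le hle
    (hmin (hnm.trans m.le_succ) (Submodule.finrank_mono hle))⟩

theorem bijective_restrict_range_pow {m : ℕ} [FiniteDimensional K (range (f ^ m))]
    (hm : range (f ^ (m + 1)) = range (f ^ m)) :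
    Function.Bijective (f.restrict (f.mapsTo_range_pow m)) :=
  have hsurj := surjective_restrict_range_pow hm
  ⟨injective_iff_surjective.2 hsurj, hsurj⟩

theorem disjoint_range_pow_ker_pow {m : ℕ} [FiniteDimensional K (range (f ^ m))]
    (hm : range (f ^ (m + 1)) = range (f ^ m)) : Disjoint (range (f ^ m)) (ker (f ^ m)) := by
  refine disjoint_def.2 fun x hxW hxU ↦ ?_
  have hinj : Function.Injective (f.restrict (f.mapsTo_range_pow m) ^ m) := by
    rw [coe_pow]
    exact (bijective_restrict_range_pow hm).injective.iterate m
  have hx0 : (f.restrict (f.mapsTo_range_pow m) ^ m) ⟨x, hxW⟩ = 0 := by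
    ext
    rw [pow_restrict, coe_restrict_apply]
    exact hxU
  simpa using congr_arg Subtype.val (hinj (hx0.trans (map_zero _).symm))

theorem isCompl_range_pow_ker_pow {m : ℕ} [FiniteDimensional K (range (f ^ m))]
    (hm : range (f ^ (m + 1)) = range (f ^ m)) : IsCompl (range (f ^ m)) (ker (f ^ m)) :=
  ⟨disjoint_range_pow_ker_pow hm, codisjoint_range_pow_ker_pow hm⟩

end Field

end Module.End

theorem LinearMap.continuous_of_isTopCompl {R E F : Type*} [Ring R] [TopologicalSpace E]
    [AddCommGroup E] [Module R E] [IsTopologicalAddGroup E] [TopologicalSpace F] [AddCommGroup F]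
    [Module R F] [ContinuousAdd F] {p q : Submodule R E} (h : IsTopCompl p q) {f : E →ₗ[R] F}
    (hp : Continuous (f ∘ₗ p.subtype)) (hq : Continuous (f ∘ₗ q.subtype)) : Continuous f := by
  have hf : ofIsCompl h.isCompl (f ∘ₗ p.subtype) (f ∘ₗ q.subtype) = f :=
    ofIsCompl_eq _ (fun _ ↦ rfl) (fun _ ↦ rfl)
  rw [← hf]
  exact (ContinuousLinearMap.ofIsTopCompl h ⟨_, hp⟩ ⟨_, hq⟩).continuous

theorem bounded_finite_potent_characterization_general {H : Type*} [NormedAddCommGroup H]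
    [InnerProductSpace ℂ H] (φ : H →ₗ[ℂ] H) :
    (Continuous ⇑φ ∧ ∃ n : ℕ, FiniteDimensional ℂ (LinearMap.range (φ ^ n))) ↔
    ∃ (W U : Submodule ℂ H) (hW : ∀ x ∈ W, φ x ∈ W) (hU : ∀ x ∈ U, φ x ∈ U),
      IsClosed (W : Set H) ∧ IsClosed (U : Set H) ∧ IsCompl W U ∧
      FiniteDimensional ℂ W ∧
      (∃ e : W ≃L[ℂ] W, ∀ w : W, e w = φ.restrict hW w) ∧
      Continuous ⇑(φ.restrict hU) ∧ IsNilpotent (φ.restrict hU) := by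
  constructor
  · rintro ⟨hφ, n, hn⟩
    obtain ⟨m, hnm, hm⟩ := exists_range_pow_succ_eq hn
    have : FiniteDimensional ℂ (range (φ ^ m)) :=
      finiteDimensional_of_le (range_pow_antitone φ hnm)
    have hφm : Continuous ⇑(φ ^ m) := by simpa only [coe_pow] using hφ.iterate m
    refine ⟨_, _, mapsTo_range_pow φ m, mapsTo_ker_pow φ m, closed_of_finiteDimensional _,
      ContinuousLinearMap.isClosed_ker ⟨φ ^ m, hφm⟩,
      isCompl_range_pow_ker_pow hm, this,
      ⟨(LinearEquiv.ofBijective _ (bijective_restrict_range_pow hm)).toContinuousLinearEquiv,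
        fun _ ↦ rfl⟩,
      (hφ.comp continuous_subtype_val).subtype_mk _, isNilpotent_restrict_ker_pow φ m⟩
  · rintro ⟨W, U, hW, hU, -, hUc, hWU, hWfin, -, hφU, k, hk⟩
    refine ⟨continuous_of_isTopCompl (hWU.symm.isTopCompl_of_isClosed_of_finiteDimensional hUc)
      (continuous_subtype_val.comp hφU) (continuous_of_finiteDimensional _), k,
      finiteDimensional_of_le (range_pow_le_of_codisjoint hWU.codisjoint hW hU hk)⟩

/-- Characterization: `φ` is a bounded finite potent endomorphism iff `H = W ⊕ U` with
`W`, `U` closed `φ`-invariant, `W` finite-dimensional, `φ|_W` a (linear) homeomorphism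
of `W`, and `φ|_U` a bounded nilpotent operator. -/
theorem bounded_finite_potent_characterization {H : Type*} [NormedAddCommGroup H]
    [InnerProductSpace ℂ H] [CompleteSpace H] (φ : H →ₗ[ℂ] H) :
    (Continuous ⇑φ ∧ ∃ n : ℕ, FiniteDimensional ℂ (LinearMap.range (φ ^ n))) ↔
    ∃ (W U : Submodule ℂ H) (hW : ∀ x ∈ W, φ x ∈ W) (hU : ∀ x ∈ U, φ x ∈ U),
      IsClosed (W : Set H) ∧ IsClosed (U : Set H) ∧ IsCompl W U ∧
      FiniteDimensional ℂ W ∧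
      (∃ e : W ≃L[ℂ] W, ∀ w : W, e w = φ.restrict hW w) ∧
      Continuous ⇑(φ.restrict hU) ∧ IsNilpotent (φ.restrict hU) :=
  bounded_finite_potent_characterization_general φ
end

section
/- Let H be an infinite-dimensional Hilbert space and φ a bounded finite potent endomorphism of H whose nilpotency-related index i(φ) satisfies i(φ) ≥ 2. Then φ admits a non-trivial closed invariant subspace, i.e., there is a closed subspace L of H with L ≠ {0}, L ≠ H, and φ(L) ⊆ L. -/
/-!
The kernel of `φ` is a closed invariant subspace. It is nonzero because `φ` restricted to `U`
is nilpotent on a nonzero space, and it is not everything because that restriction is nonzero,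
which is exactly what `i(φ) ≥ 2` says.
-/

namespace Module.End

variable {R M : Type*} [Ring R] [AddCommGroup M] [Module R M]

theorem ker_ne_bot_of_isNilpotent [Nontrivial M] {f : Module.End R M} (hf : IsNilpotent f) :
    LinearMap.ker f ≠ ⊥ := by
  obtain ⟨n, hn⟩ := hf
  rw [Ne, LinearMap.ker_eq_bot]
  intro hinj
  have hpow : Function.Injective ⇑(f ^ n) := by
    rw [Module.End.coe_pow]
    exact hinj.iterate n
  rw [hn] at hpow
  obtain ⟨x, hx⟩ := exists_ne (0 : M)
  exact hx (hpow (by simp))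

variable {f : Module.End R M} {p : Submodule R M}

theorem ker_ne_top_of_restrict_ne_zero (hp : ∀ x ∈ p, f x ∈ p) (hf : f.restrict hp ≠ 0) :
    LinearMap.ker f ≠ ⊤ := by
  rw [Ne, LinearMap.ker_eq_top]
  rintro rfl
  exact hf (LinearMap.ext fun _ => rfl)

theorem ker_ne_bot_of_isNilpotent_restrict (hp : ∀ x ∈ p, f x ∈ p)
    (hnil : IsNilpotent (f.restrict hp)) (hf : f.restrict hp ≠ 0) : LinearMap.ker f ≠ ⊥ := by
  have : Nontrivial p := by
    by_contra hp0
    rw [not_nontrivial_iff_subsingleton] at hp0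
    exact hf (Subsingleton.elim _ _)
  intro hker
  apply ker_ne_bot_of_isNilpotent hnil
  rw [LinearMap.ker_restrict, hker, Submodule.comap_bot, Submodule.ker_subtype]

end Module.End

open Module.End in
theorem invariant_subspace_of_finite_potent_general {H : Type*} [NormedAddCommGroup H]
    [InnerProductSpace ℂ H]
    (φ : H →ₗ[ℂ] H) (hb : Continuous ⇑φ)
    (U : Submodule ℂ H)
    (hU : ∀ x ∈ U, φ x ∈ U)
    (hUn : IsNilpotent (φ.restrict hU))
    -- the index of `φ`, i.e. the nilpotency order of `φ|_U`, is at least 2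
    (hidx : ∀ n : ℕ, (φ.restrict hU) ^ n = 0 → 2 ≤ n) :
    ∃ L : Submodule ℂ H, IsClosed (L : Set H) ∧ L ≠ ⊥ ∧ L ≠ ⊤ ∧ ∀ x ∈ L, φ x ∈ L := by
  have hψ : φ.restrict hU ≠ 0 := fun h => by simpa using hidx 1 (by rw [pow_one, h])
  refine ⟨LinearMap.ker φ, ContinuousLinearMap.isClosed_ker ⟨φ, hb⟩,
    ker_ne_bot_of_isNilpotent_restrict hU hUn hψ, ker_ne_top_of_restrict_ne_zero hU hψ,
    fun x hx => ?_⟩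
  rw [LinearMap.mem_ker] at hx ⊢
  rw [hx, map_zero]

/-- Invariant Subspace Problem for bounded finite potent endomorphisms of index ≥ 2:
such an operator on an infinite-dimensional Hilbert space has a non-trivial closed
invariant subspace. -/
theorem invariant_subspace_of_finite_potent {H : Type*} [NormedAddCommGroup H]
    [InnerProductSpace ℂ H] [CompleteSpace H]
    (hinf : ¬ FiniteDimensional ℂ H)
    (φ : H →ₗ[ℂ] H) (hb : Continuous ⇑φ)
    (W U : Submodule ℂ H) (hWU : IsCompl W U) [FiniteDimensional ℂ W]
    (hW : ∀ x ∈ W, φ x ∈ W) (hU : ∀ x ∈ U, φ x ∈ U)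
    (hWa : Function.Bijective (φ.restrict hW))
    (hUn : IsNilpotent (φ.restrict hU))
    -- the index of `φ`, i.e. the nilpotency order of `φ|_U`, is at least 2
    (hidx : ∀ n : ℕ, (φ.restrict hU) ^ n = 0 → 2 ≤ n) :
    ∃ L : Submodule ℂ H, IsClosed (L : Set H) ∧ L ≠ ⊥ ∧ L ≠ ⊤ ∧ ∀ x ∈ L, φ x ∈ L :=
  invariant_subspace_of_finite_potent_general φ hb U hU hUn hidx
end

section
/- Let H be a Hilbert space and φ a bounded finite potent endomorphism with AST-decomposition H = W_φ ⊕ U_φ and index i(φ) ≥ 1. Then the spectrum of φ equals {0} ∪ {eigenvalues of φ|_{W_φ}}. If i(φ) = 0 (i.e., H is finite-dimensional and φ is an automorphism), the spectrum equals the set of eigenvalues of φ|_{W_φ}. -/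
/-!
On a Banach space the spectrum of a bounded operator is its algebraic spectrum (open mapping
theorem). Since `W` and `U` are complementary and invariant, `φ - μ` is bijective exactly when its
restrictions to `W` and `U` are, so `σ(φ) = σ(φ|_W) ∪ σ(φ|_U)`. On the finite-dimensional `W` the
spectrum consists of the eigenvalues, and the nilpotent `φ|_U` has spectrum `{0}` when `U ≠ 0`
and `∅` when `U = 0`.
-/

open Function

namespace Module.End

section Ring

variable {R M : Type*} [Ring R] [AddCommGroup M] [Module R M] {p q : Submodule R M}

theorem bijective_iff_bijective_restrict_of_isCompl (hpq : IsCompl p q) {f : End R M}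
    (hp : ∀ x ∈ p, f x ∈ p) (hq : ∀ x ∈ q, f x ∈ q) :
    Bijective f ↔ Bijective (f.restrict hp) ∧ Bijective (f.restrict hq) := by
  set e := Submodule.prodEquivOfIsCompl p q hpq
  have hfe : f ∘ e = e ∘ Prod.map (f.restrict hp) (f.restrict hq) := by
    funext ⟨x, y⟩
    simp only [comp_apply, Prod.map_apply, e, Submodule.coe_prodEquivOfIsCompl', map_add,
      LinearMap.coe_restrict_apply]
  rw [← Bijective.of_comp_iff f e.bijective, hfe, Bijective.of_comp_iff' e.bijective,
    Prod.map_bijective]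

end Ring

section CommRing

variable {R M : Type*} [CommRing R] [AddCommGroup M] [Module R M] {p q : Submodule R M}

theorem spectrum_eq_union_of_isCompl (hpq : IsCompl p q) {f : End R M}
    (hp : ∀ x ∈ p, f x ∈ p) (hq : ∀ x ∈ q, f x ∈ q) :
    spectrum R f = spectrum R (f.restrict hp) ∪ spectrum R (f.restrict hq) := by
  ext μ
  have hpμ : ∀ x ∈ p, (algebraMap R (End R M) μ - f) x ∈ p := fun x hx =>
    p.sub_mem (p.smul_mem μ hx) (hp x hx)
  have hqμ : ∀ x ∈ q, (algebraMap R (End R M) μ - f) x ∈ q := fun x hx =>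
    q.sub_mem (q.smul_mem μ hx) (hq x hx)
  simp only [spectrum.mem_iff, Set.mem_union, isUnit_iff, ← not_and_or,
    bijective_iff_bijective_restrict_of_isCompl hpq hpμ hqμ]
  rfl

end CommRing

end Module.End

theorem IsNilpotent.spectrum_eq_singleton_zero {K A : Type*} [Field K] [Ring A] [Nontrivial A]
    [Algebra K A] {a : A} (ha : IsNilpotent a) : spectrum K a = {0} := by
  ext μ
  rw [spectrum.mem_iff, Set.mem_singleton_iff]
  constructor
  · intro h
    by_contra hμ
    rw [sub_eq_add_neg] at h
    exact h (ha.neg.isUnit_add_left_of_commute ((isUnit_iff_ne_zero.2 hμ).map _)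
      (Algebra.commute_algebraMap_right μ a).neg_left)
  · rintro rfl
    simpa using ha.neg.not_isUnit

theorem spectrum_of_finite_potent_general {H : Type*} [NormedAddCommGroup H]
    [InnerProductSpace ℂ H] [CompleteSpace H]
    (φ : H →L[ℂ] H)
    (W U : Submodule ℂ H) (hWU : IsCompl W U) [FiniteDimensional ℂ W]
    (hW : ∀ x ∈ W, φ.toLinearMap x ∈ W) (hU : ∀ x ∈ U, φ.toLinearMap x ∈ U)
    (hUn : IsNilpotent (φ.toLinearMap.restrict hU)) :
    (U ≠ ⊥ → spectrum ℂ φ =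
      insert (0 : ℂ) {μ : ℂ | Module.End.HasEigenvalue (φ.toLinearMap.restrict hW) μ}) ∧
    (U = ⊥ → spectrum ℂ φ =
      {μ : ℂ | Module.End.HasEigenvalue (φ.toLinearMap.restrict hW) μ}) := by
  have hσ : spectrum ℂ φ = {μ | Module.End.HasEigenvalue (φ.toLinearMap.restrict hW) μ} ∪
      spectrum ℂ (φ.toLinearMap.restrict hU) := by
    simp only [ContinuousLinearMap.spectrum_eq, Module.End.spectrum_eq_union_of_isCompl hWU hW hU,
      Module.End.hasEigenvalue_iff_mem_spectrum, Set.ofPred_mem_eq]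
  refine ⟨fun hU0 => ?_, fun hU0 => ?_⟩
  · have : Nontrivial U := Submodule.nontrivial_iff_ne_bot.2 hU0
    rw [hσ, hUn.spectrum_eq_singleton_zero, Set.union_singleton]
  · subst hU0
    rw [hσ, spectrum.of_subsingleton, Set.union_empty]

/-- The spectrum of a bounded finite potent endomorphism `φ` with AST-decomposition
`H = W ⊕ U` is `{0} ∪ {eigenvalues of φ|_W}` when `i(φ) ≥ 1` (i.e. `U ≠ ⊥`), and is
the set of eigenvalues of `φ|_W` when `i(φ) = 0` (i.e. `U = ⊥`). -/
theorem spectrum_of_finite_potent {H : Type*} [NormedAddCommGroup H]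
    [InnerProductSpace ℂ H] [CompleteSpace H]
    (φ : H →L[ℂ] H)
    (W U : Submodule ℂ H) (hWU : IsCompl W U) [FiniteDimensional ℂ W]
    (hW : ∀ x ∈ W, φ.toLinearMap x ∈ W) (hU : ∀ x ∈ U, φ.toLinearMap x ∈ U)
    (hWa : Function.Bijective (φ.toLinearMap.restrict hW))
    (hUn : IsNilpotent (φ.toLinearMap.restrict hU)) :
    (U ≠ ⊥ → spectrum ℂ φ =
      insert (0 : ℂ) {μ : ℂ | Module.End.HasEigenvalue (φ.toLinearMap.restrict hW) μ}) ∧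
    (U = ⊥ → spectrum ℂ φ =
      {μ : ℂ | Module.End.HasEigenvalue (φ.toLinearMap.restrict hW) μ}) :=
  spectrum_of_finite_potent_general φ W U hWU hW hU hUn
end

section
/- Let H be a Hilbert space and φ a bounded finite potent endomorphism. Then: (1) the spectrum σ(φ) is finite; (2) every λ ∈ σ(φ) is an eigenvalue of φ; (3) for every nonzero λ ∈ σ(φ), the eigenspace Ker(φ − λ·Id) is finite-dimensional. -/
open Polynomial

/-- The coercion from continuous linear endomorphisms to linear endomorphisms,
as an algebra homomorphism. -/
noncomputable def clmCoeAlgHom (H : Type*) [NormedAddCommGroup H] [InnerProductSpace ℂ H] :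
    (H →L[ℂ] H) →ₐ[ℂ] (H →ₗ[ℂ] H) :=
  { ContinuousLinearMap.toLinearMapRingHom with
    commutes' := fun c => by
      ext x
      simp [Algebra.algebraMap_eq_smul_one] }

lemma aeval_restrict_apply {R M : Type*} [CommRing R] [AddCommGroup M] [Module R M]
    (f : M →ₗ[R] M) {W : Submodule R M} (h : ∀ x ∈ W, f x ∈ W) (q : R[X]) (y : W) :
    Polynomial.aeval f q (y : M) = ((Polynomial.aeval (f.restrict h) q) y : M) := by
  induction q using Polynomial.induction_on' with
  | add p q hp hq => simp [hp, hq]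
  | monomial k a =>
    simp [Polynomial.aeval_monomial, Module.algebraMap_end_apply,
      Module.End.pow_restrict _ h, LinearMap.restrict_apply]

lemma hasEigenvalue_of_annihilating {H : Type*} [NormedAddCommGroup H]
    [InnerProductSpace ℂ H] [CompleteSpace H] [Nontrivial H]
    (φ : H →L[ℂ] H) {μ : ℂ} (hμ : μ ∈ spectrum ℂ φ) :
    ∀ N (s : ℂ[X]), s.natDegree ≤ N → s ≠ 0 → Polynomial.aeval φ s = 0 →
      Module.End.HasEigenvalue φ.toLinearMap μ := by
  intro N
  induction N with
  | zero =>
    intro s hdeg hs0 hann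
    exfalso
    -- s is a nonzero constant, yet μ is a root of s
    have hroot : s.eval μ = 0 := by
      have h1 := spectrum.subset_polynomial_aeval φ s ⟨μ, hμ, rfl⟩
      rwa [hann, spectrum.zero_eq, Set.mem_singleton_iff] at h1
    have : s = C (s.coeff 0) := Polynomial.eq_C_of_natDegree_le_zero hdeg
    rw [this] at hroot hs0
    simp at hroot
    simp [hroot] at hs0
  | succ N ih =>
    intro s hdeg hs0 hann
    by_cases hev : Module.End.HasEigenvalue φ.toLinearMap μ
    · exact hev
    -- the eigenspace is trivial
    have hbot : Module.End.eigenspace φ.toLinearMap μ = ⊥ := by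
      rw [Module.End.hasEigenvalue_iff, not_ne_iff] at hev
      exact hev
    have hroot : s.eval μ = 0 := by
      have h1 := spectrum.subset_polynomial_aeval φ s ⟨μ, hμ, rfl⟩
      rwa [hann, spectrum.zero_eq, Set.mem_singleton_iff] at h1
    -- factor out (X - C μ)
    set t := s /ₘ (X - C μ) with ht
    have hst : (X - C μ) * t = s :=
      (Polynomial.mul_divByMonic_eq_iff_isRoot).mpr hroot
    have ht0 : t ≠ 0 := by
      intro h0
      rw [h0, mul_zero] at hst
      exact hs0 hst.symm
    have hXμ : (X - C μ : ℂ[X]) ≠ 0 := Polynomial.X_sub_C_ne_zero μ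
    have hdegt : t.natDegree ≤ N := by
      have := Polynomial.natDegree_mul hXμ ht0
      rw [hst, Polynomial.natDegree_X_sub_C] at this
      omega
    -- aeval φ t = 0
    have hannt : Polynomial.aeval φ t = 0 := by
      ext x
      have h2 : Polynomial.aeval φ ((X - C μ) * t) = 0 := by rw [hst]; exact hann
      rw [map_mul] at h2
      have h3 := congrArg (fun (f : H →L[ℂ] H) => f x) h2
      simp only [ContinuousLinearMap.mul_apply, map_sub, aeval_X, aeval_C,
        ContinuousLinearMap.sub_apply, ContinuousLinearMap.zero_apply] at h3
      set w := Polynomial.aeval φ t x with hw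
      have hφw : φ.toLinearMap w = μ • w := by
        have : φ w - μ • w = 0 := by
          simpa [Algebra.algebraMap_eq_smul_one] using h3
        have := sub_eq_zero.mp this
        simpa using this
      have : w ∈ Module.End.eigenspace φ.toLinearMap μ :=
        Module.End.mem_eigenspace_iff.mpr hφw
      rw [hbot] at this
      simpa using this
    exact ih t hdegt ht0 hannt

/-- For a bounded finite potent endomorphism `φ`: the spectrum is finite, every point
of the spectrum is an eigenvalue, and eigenspaces for nonzero spectral values are
finite-dimensional. -/
theorem spectrum_properties_of_finite_potent {H : Type*} [NormedAddCommGroup H]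
    [InnerProductSpace ℂ H] [CompleteSpace H]
    (φ : H →L[ℂ] H)
    (hfp : ∃ n : ℕ, FiniteDimensional ℂ (LinearMap.range (φ.toLinearMap ^ n))) :
    (spectrum ℂ φ).Finite ∧
    (∀ μ ∈ spectrum ℂ φ, Module.End.HasEigenvalue φ.toLinearMap μ) ∧
    (∀ μ ∈ spectrum ℂ φ, μ ≠ 0 →
      FiniteDimensional ℂ (Module.End.eigenspace φ.toLinearMap μ)) := by
  rcases subsingleton_or_nontrivial H with hH | hH
  · -- trivial space: the spectrum is empty
    have hsp : spectrum ℂ φ = ∅ := by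
      ext z
      simp only [Set.mem_empty_iff_false, iff_false]
      intro hz
      exact (spectrum.mem_iff.mp hz) (isUnit_of_subsingleton _)
    refine ⟨by simp [hsp], ?_, ?_⟩ <;> simp [hsp]
  · obtain ⟨n, hn⟩ := hfp
    set φL := φ.toLinearMap with hφL
    set W : Submodule ℂ H := LinearMap.range (φL ^ n) with hWdef
    have hW : ∀ x ∈ W, φL x ∈ W := by
      rintro x ⟨y, rfl⟩
      exact ⟨φL y, by rw [← Module.End.mul_apply, ← Module.End.mul_apply, ← pow_succ, ← pow_succ']⟩
    set g : Module.End ℂ W := φL.restrict hW with hg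
    haveI : FiniteDimensional ℂ W := hn
    set q : ℂ[X] := LinearMap.charpoly g with hqdef
    have hqmonic : q.Monic := LinearMap.charpoly_monic g
    have hq : Polynomial.aeval g q = 0 := LinearMap.aeval_self_charpoly g
    set p : ℂ[X] := q * X ^ n with hpdef
    have hpmonic : p.Monic := hqmonic.mul (monic_X_pow n)
    have hp0 : p ≠ 0 := hpmonic.ne_zero
    -- p annihilates φ
    have hannL : Polynomial.aeval φL p = 0 := by
      ext x
      have hx : (φL ^ n) x ∈ W := ⟨x, rfl⟩
      have : Polynomial.aeval φL p x = Polynomial.aeval φL q ((φL ^ n) x) := by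
        rw [hpdef, map_mul]
        simp [Module.End.mul_apply]
      rw [this, aeval_restrict_apply φL hW q ⟨(φL ^ n) x, hx⟩, ← hg, hq]
      simp
    have hann : Polynomial.aeval φ p = 0 := by
      apply ContinuousLinearMap.coe_injective
      calc ((Polynomial.aeval φ p : H →L[ℂ] H) : H →ₗ[ℂ] H)
          = clmCoeAlgHom H (Polynomial.aeval φ p) := rfl
        _ = Polynomial.aeval (clmCoeAlgHom H φ) p :=
            (Polynomial.aeval_algHom_apply (clmCoeAlgHom H) φ p).symm
        _ = Polynomial.aeval φL p := rfl
        _ = 0 := hannL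
        _ = ((0 : H →L[ℂ] H) : H →ₗ[ℂ] H) := by ext x; simp
    -- spectrum is contained in the roots of p
    have hroots : spectrum ℂ φ ⊆ {z | p.IsRoot z} := by
      intro z hz
      have h1 := spectrum.subset_polynomial_aeval φ p ⟨z, hz, rfl⟩
      rwa [hann, spectrum.zero_eq, Set.mem_singleton_iff] at h1
    refine ⟨(Polynomial.finite_setOf_isRoot hp0).subset hroots, ?_, ?_⟩
    · intro μ hμ
      exact hasEigenvalue_of_annihilating φ hμ p.natDegree p le_rfl hp0 hann
    · intro μ hμ hμ0
      have hle : Module.End.eigenspace φL μ ≤ W := by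
        intro v hv
        have hv' : φL v = μ • v := Module.End.mem_eigenspace_iff.mp hv
        have hpow : ∀ k : ℕ, (φL ^ k) v = μ ^ k • v := by
          intro k
          induction k with
          | zero => simp
          | succ k ihk =>
            rw [pow_succ', Module.End.mul_apply, ihk, map_smul, hv', pow_succ',
              smul_smul, mul_comm]
        refine ⟨(μ ^ n)⁻¹ • v, ?_⟩
        rw [map_smul, hpow n, smul_smul, inv_mul_cancel₀ (pow_ne_zero n hμ0), one_smul]
      exact Submodule.finiteDimensional_of_le hle
end

section
/- Let H be a Hilbert space, φ a bounded finite potent endomorphism, and λ ∈ ℂ nonzero. Then for every n ∈ ℕ, Ker((φ − λ·Id)ⁿ) = Ker((φ|_{W_φ} − λ·Id)ⁿ); in particular the algebraic multiplicity of λ as an eigenvalue of φ equals its algebraic multiplicity as an eigenvalue of φ|_{W_φ}. -/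
/-!
On the nilpotent summand `U` the map `φ - μ` is a unit for `μ ≠ 0`, so `(φ - μ)ⁿ` is injective
on `U`. Since `W` and `U` are both invariant, the `U`-component of any vector killed by
`(φ - μ)ⁿ` is killed too, hence vanishes: every generalized `μ`-eigenvector lies in `W`, where it
is a generalized eigenvector of `φ|_W`.
-/

open Module Set

theorem IsNilpotent.isUnit_sub_smul_one {K A : Type*} [Field K] [Ring A] [Algebra K A]
    {a : A} (ha : IsNilpotent a) {μ : K} (hμ : μ ≠ 0) : IsUnit (a - μ • 1) := by
  have hunit : IsUnit (algebraMap K A (-μ)) := (neg_ne_zero.mpr hμ).isUnit.map _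
  simpa [sub_eq_add_neg, Algebra.algebraMap_eq_smul_one] using
    ha.isUnit_add_right_of_commute hunit (Algebra.commute_algebraMap_right _ _)

namespace LinearMap

variable {R M : Type*} [Ring R] [AddCommGroup M] [Module R M] {W U : Submodule R M}

theorem ker_le_of_isCompl_of_injective_restrict {g : End R M} (hWU : IsCompl W U)
    (hW : MapsTo g W W) (hU : MapsTo g U U) (hinj : Function.Injective (g.restrict hU)) :
    ker g ≤ W := by
  intro x hx
  obtain ⟨w, hw, u, hu, rfl⟩ := Submodule.mem_sup.mp
    (hWU.sup_eq_top ▸ Submodule.mem_top : x ∈ W ⊔ U)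
  have hgu : g u = -g w := eq_neg_of_add_eq_zero_right (by simpa using hx)
  have hgu_zero : g u = 0 :=
    (Submodule.disjoint_def.mp hWU.disjoint) _ (hgu ▸ W.neg_mem (hW hw)) (hU hu)
  have hu_zero : u = 0 := congrArg Subtype.val <| show (⟨u, hu⟩ : U) = 0 from
    hinj <| by rw [map_zero]; exact Subtype.ext hgu_zero
  simpa [hu_zero] using hw

end LinearMap

namespace Module.End

variable {K M : Type*} [Field K] [AddCommGroup M] [Module K M] {W U : Submodule K M}

theorem genEigenspace_le_of_isCompl_of_isNilpotent {f : End K M} (hWU : IsCompl W U)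
    (hW : MapsTo f W W) (hU : MapsTo f U U) (hUn : IsNilpotent (f.restrict hU))
    {μ : K} (hμ : μ ≠ 0) (n : ℕ) : f.genEigenspace μ n ≤ W := by
  have hsub : MapsTo (f - μ • (1 : End K M)) U U := fun _ hx ↦
    U.sub_mem (hU hx) (U.smul_mem μ hx)
  have hunit : IsUnit ((f - μ • (1 : End K M)).restrict hsub ^ n) := by
    have hres : (f - μ • (1 : End K M)).restrict hsub = f.restrict hU - μ • 1 := by
      ext; rfl
    rw [hres]
    exact (hUn.isUnit_sub_smul_one hμ).pow n
  rw [genEigenspace_nat]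
  refine LinearMap.ker_le_of_isCompl_of_injective_restrict hWU
    (pow_apply_mem_of_forall_mem n fun _ hx ↦ W.sub_mem (hW hx) (W.smul_mem μ hx))
    (pow_apply_mem_of_forall_mem n hsub) ?_
  rw [← pow_restrict n hsub]
  exact ((isUnit_iff _).mp hunit).injective

theorem ker_pow_sub_smul_eq_map_restrict {f : End K M} (hWU : IsCompl W U)
    (hW : MapsTo f W W) (hU : MapsTo f U U) (hUn : IsNilpotent (f.restrict hU))
    {μ : K} (hμ : μ ≠ 0) (n : ℕ) :
    LinearMap.ker ((f - μ • 1) ^ n) =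
      (LinearMap.ker ((f.restrict hW - μ • 1) ^ n)).map W.subtype := by
  rw [← genEigenspace_nat, ← genEigenspace_nat, ← Submodule.inf_genEigenspace f W hW,
    inf_eq_right.mpr (genEigenspace_le_of_isCompl_of_isNilpotent hWU hW hU hUn hμ n)]

end Module.End

theorem generalized_eigenspace_eq_restrict_general {H : Type*} [NormedAddCommGroup H]
    [InnerProductSpace ℂ H]
    (φ : H →L[ℂ] H)
    (W U : Submodule ℂ H) (hWU : IsCompl W U)
    (hW : ∀ x ∈ W, φ.toLinearMap x ∈ W) (hU : ∀ x ∈ U, φ.toLinearMap x ∈ U)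
    (hUn : IsNilpotent (φ.toLinearMap.restrict hU))
    (μ : ℂ) (hμ : μ ≠ 0) :
    (∀ n : ℕ, LinearMap.ker ((φ.toLinearMap - μ • 1) ^ n) =
      Submodule.map W.subtype
        (LinearMap.ker ((φ.toLinearMap.restrict hW - μ • 1) ^ n))) ∧
    Module.finrank ℂ ↥(⨆ n : ℕ, LinearMap.ker ((φ.toLinearMap - μ • 1) ^ n)) =
      Module.finrank ℂ
        ↥(⨆ n : ℕ, LinearMap.ker ((φ.toLinearMap.restrict hW - μ • 1) ^ n)) := by
  have hker := Module.End.ker_pow_sub_smul_eq_map_restrict hWU hW hU hUn hμ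
  refine ⟨hker, ?_⟩
  rw [iSup_congr hker, ← Submodule.map_iSup, Submodule.finrank_map_subtype_eq]

/-- For nonzero `μ` and every `n`, `Ker (φ - μ·Id)ⁿ = Ker (φ|_{W_φ} - μ·Id)ⁿ` (viewed
inside `H`); in particular the algebraic multiplicities of `μ` for `φ` and for
`φ|_{W_φ}` agree. -/
theorem generalized_eigenspace_eq_restrict {H : Type*} [NormedAddCommGroup H]
    [InnerProductSpace ℂ H] [CompleteSpace H]
    (φ : H →L[ℂ] H)
    (hfp : ∃ n : ℕ, FiniteDimensional ℂ (LinearMap.range (φ.toLinearMap ^ n)))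
    (W U : Submodule ℂ H) (hWU : IsCompl W U) [FiniteDimensional ℂ W]
    (hW : ∀ x ∈ W, φ.toLinearMap x ∈ W) (hU : ∀ x ∈ U, φ.toLinearMap x ∈ U)
    (hWa : Function.Bijective (φ.toLinearMap.restrict hW))
    (hUn : IsNilpotent (φ.toLinearMap.restrict hU))
    (μ : ℂ) (hμ : μ ≠ 0) :
    (∀ n : ℕ, LinearMap.ker ((φ.toLinearMap - μ • 1) ^ n) =
      Submodule.map W.subtype
        (LinearMap.ker ((φ.toLinearMap.restrict hW - μ • 1) ^ n))) ∧
    Module.finrank ℂ ↥(⨆ n : ℕ, LinearMap.ker ((φ.toLinearMap - μ • 1) ^ n)) =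
      Module.finrank ℂ
        ↥(⨆ n : ℕ, LinearMap.ker ((φ.toLinearMap.restrict hW - μ • 1) ^ n)) :=
  generalized_eigenspace_eq_restrict_general φ W U hWU hW hU hUn μ hμ
end

section
/- Every bounded finite potent endomorphism φ of a Hilbert space H is a Riesz operator: for every nonzero λ in the spectrum of φ, H decomposes as H = N(λ) ⊕ F(λ) where N(λ) and F(λ) are φ-invariant, N(λ) is finite-dimensional, F(λ) is closed, φ − λ·Id is nilpotent on N(λ), and φ − λ·Id is a homeomorphism of F(λ). -/
/-!
Put `ψ = φ - μ`. Since `μ ≠ 0`, the polynomials `X ^ n` and `(X - μ) ^ k` are coprime, so every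
`ker ψ ^ k` lies in the finite-dimensional space `range φ ^ n` and every `range ψ ^ k` contains the
closed, finite-codimensional subspace `ker φ ^ n`. Both chains therefore stabilise at some `m`, and
the Fitting decomposition `H = ker ψ ^ m ⊕ range ψ ^ m` is the required one. The range is closed
because it contains `ker φ ^ n`, and `ψ` is a bijection of this Banach space onto itself, hence a
homeomorphism by the open mapping theorem.
-/

open Filter (EventuallyConst atTop eventuallyConst_atTop)
open Function LinearMap Polynomial

section Algebra

variable {R M : Type*} [CommRing R] [AddCommGroup M] [Module R M]

theorem Polynomial.ker_aeval_le_range_aeval_of_isCoprime (f : Module.End R M) {p q : R[X]}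
    (h : IsCoprime p q) : ker (aeval f q) ≤ range (aeval f p) := by
  obtain ⟨a, b, hab⟩ := h
  intro x hx
  have hx : aeval f q x = 0 := hx
  refine ⟨aeval f a x, ?_⟩
  calc aeval f p (aeval f a x) = aeval f a (aeval f p x) := by
        rw [← Module.End.mul_apply, ← map_mul, mul_comm, map_mul, Module.End.mul_apply]
    _ = aeval f (a * p + b * q) x := by
        simp only [map_add, map_mul, LinearMap.add_apply, Module.End.mul_apply, hx, map_zero,
          add_zero]
    _ = x := by rw [hab, map_one, Module.End.one_apply]

theorem Polynomial.isCoprime_X_pow_X_sub_C_pow {μ : R} (hμ : IsUnit μ) (n k : ℕ) :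
    IsCoprime ((X : R[X]) ^ n) ((X - C μ) ^ k) := by
  have h : IsCoprime (X - C (0 : R)) (X - C μ) :=
    isCoprime_X_sub_C_of_isUnit_sub (by simpa using hμ.neg)
  simpa using h.pow

theorem Submodule.eventuallyConst_of_monotone_of_le {c : ℕ → Submodule R M} (hc : Monotone c)
    {p : Submodule R M} [IsNoetherian R p] (hp : ∀ k, c k ≤ p) : EventuallyConst c atTop := by
  let d : ℕ →o Submodule R p := ⟨fun k => comap p.subtype (c k), fun _ _ h => comap_mono (hc h)⟩
  obtain ⟨n, hn⟩ := monotone_stabilizes_iff_noetherian.mpr inferInstance d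
  have hcd : ∀ k, c k = map p.subtype (d k) := fun k => by
    rw [show d k = comap p.subtype (c k) from rfl, map_comap_subtype, inf_eq_right.mpr (hp k)]
  exact eventuallyConst_atTop.mpr ⟨n, fun k hk => by rw [hcd, hcd, hn k hk]⟩

theorem Submodule.eventuallyConst_of_antitone_of_ge {c : ℕ → Submodule R M} (hc : Antitone c)
    {p : Submodule R M} [IsArtinian R (M ⧸ p)] (hp : ∀ k, p ≤ c k) : EventuallyConst c atTop := by
  let d : ℕ →o (Submodule R (M ⧸ p))ᵒᵈ :=
    ⟨fun k => OrderDual.toDual (map p.mkQ (c k)), fun _ _ h => map_mono (hc h)⟩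
  obtain ⟨n, hn⟩ := IsArtinian.monotone_stabilizes d
  have hcd : ∀ k, c k = comap p.mkQ (OrderDual.ofDual (d k)) := fun k => by
    rw [show OrderDual.ofDual (d k) = map p.mkQ (c k) from rfl, comap_map_mkQ,
      sup_eq_right.mpr (hp k)]
  exact eventuallyConst_atTop.mpr ⟨n, fun k hk => by rw [hcd, hcd, hn k hk]⟩

namespace Module.End

theorem aeval_X_sub_C_pow (f : End R M) (μ : R) (k : ℕ) :
    aeval f ((X - C μ) ^ k) = (f - μ • 1) ^ k := by
  simp [Algebra.algebraMap_eq_smul_one]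

theorem ker_pow_sub_smul_le_range_pow {f : End R M} {μ : R} (hμ : IsUnit μ) (n k : ℕ) :
    ker ((f - μ • 1) ^ k) ≤ range (f ^ n) := by
  simpa [aeval_X_sub_C_pow] using
    ker_aeval_le_range_aeval_of_isCoprime f (isCoprime_X_pow_X_sub_C_pow hμ n k)

theorem ker_pow_le_range_pow_sub_smul {f : End R M} {μ : R} (hμ : IsUnit μ) (n k : ℕ) :
    ker (f ^ n) ≤ range ((f - μ • 1) ^ k) := by
  simpa [aeval_X_sub_C_pow] using
    ker_aeval_le_range_aeval_of_isCoprime f (isCoprime_X_pow_X_sub_C_pow hμ n k).symm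

theorem map_mem_ker_of_commute {f g : End R M} (h : Commute f g) {x : M} (hx : x ∈ ker g) :
    f x ∈ ker g := by
  rw [LinearMap.mem_ker, ← mul_apply, ← h.eq, mul_apply, LinearMap.mem_ker.mp hx, map_zero]

theorem map_mem_range_of_commute {f g : End R M} (h : Commute f g) {x : M} (hx : x ∈ range g) :
    f x ∈ range g := by
  obtain ⟨y, rfl⟩ := hx
  exact ⟨f y, by rw [← mul_apply, ← h.eq, mul_apply]⟩

theorem isNilpotent_restrict_ker_pow_s15 (f : End R M) (m : ℕ)
    (h : ∀ x ∈ ker (f ^ m), f x ∈ ker (f ^ m)) : IsNilpotent (f.restrict h) := by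
  refine ⟨m, ?_⟩
  ext ⟨x, hx⟩
  rw [pow_restrict]
  exact LinearMap.mem_ker.mp hx

theorem isCompl_ker_pow_range_pow (f : End R M) {m : ℕ}
    (hker : ∀ k, m ≤ k → ker (f ^ k) = ker (f ^ m))
    (hrange : ∀ k, m ≤ k → range (f ^ k) = range (f ^ m)) :
    IsCompl (ker (f ^ m)) (range (f ^ m)) := by
  constructor
  · rw [Submodule.disjoint_def]
    rintro _ hx ⟨y, rfl⟩
    rw [← LinearMap.mem_ker, ← hker (m + m) le_add_self, LinearMap.mem_ker, pow_add, mul_apply]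
    exact hx
  · rw [codisjoint_iff, eq_top_iff]
    intro x _
    obtain ⟨y, hy⟩ : (f ^ m) x ∈ range (f ^ (m + m)) := by
      rw [hrange (m + m) le_add_self]
      exact mem_range_self (f ^ m) x
    rw [pow_add, mul_apply] at hy
    have hx : x - (f ^ m) y ∈ ker (f ^ m) := by rw [LinearMap.mem_ker, map_sub, hy, sub_self]
    simpa using Submodule.add_mem_sup hx (mem_range_self (f ^ m) y)

theorem bijective_restrict_range_pow_s15 (f : End R M) {m : ℕ}
    (hker : ∀ k, m ≤ k → ker (f ^ k) = ker (f ^ m))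
    (hrange : ∀ k, m ≤ k → range (f ^ k) = range (f ^ m))
    (h : ∀ x ∈ range (f ^ m), f x ∈ range (f ^ m)) : Bijective (f.restrict h) := by
  have hker_le : ker f ≤ ker (f ^ m) := by
    rw [← hker (m + 1) m.le_succ, pow_succ, mul_eq_comp]
    exact ker_le_ker_comp f _
  have hdisj := (isCompl_ker_pow_range_pow f hker hrange).disjoint.mono_left hker_le
  constructor
  · rw [← ker_eq_bot, eq_bot_iff]
    rintro ⟨x, hx⟩ hfx
    simpa using Submodule.disjoint_def.mp hdisj x (congrArg Subtype.val hfx) hx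
  · rintro ⟨x, hx⟩
    rw [← hrange (m + 1) m.le_succ] at hx
    obtain ⟨y, rfl⟩ := hx
    exact ⟨⟨(f ^ m) y, mem_range_self _ y⟩, Subtype.ext (by simp [pow_succ'])⟩

end Module.End

end Algebra

theorem LinearMap.exists_continuousLinearEquiv_restrict {𝕜 E : Type*} [NontriviallyNormedField 𝕜]
    [NormedAddCommGroup E] [NormedSpace 𝕜 E] [CompleteSpace E] (f : E →ₗ[𝕜] E) (hf : Continuous f)
    {p : Submodule 𝕜 E} (hp : IsClosed (p : Set E)) (h : ∀ x ∈ p, f x ∈ p)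
    (hbij : Bijective (f.restrict h)) : ∃ e : p ≃L[𝕜] p, ∀ x : p, e x = f.restrict h x := by
  have := hp.completeSpace_coe
  let g : p →L[𝕜] p := ⟨f.restrict h, (hf.comp continuous_subtype_val).subtype_mk _⟩
  exact ⟨.ofBijective g (ker_eq_bot.mpr hbij.1) (range_eq_top.mpr hbij.2), fun _ => rfl⟩

/-- Every bounded finite potent endomorphism is a Riesz operator: every nonzero point
`μ` of the spectrum is a Riesz point, i.e. `H = N ⊕ F` with `N`, `F` invariant under
`φ`, `N` finite-dimensional, `F` closed, `φ - μ·Id` nilpotent on `N` and a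
homeomorphism of `F`. -/
theorem finite_potent_is_riesz {H : Type*} [NormedAddCommGroup H]
    [InnerProductSpace ℂ H] [CompleteSpace H]
    (φ : H →L[ℂ] H)
    (hfp : ∃ n : ℕ, FiniteDimensional ℂ (LinearMap.range (φ.toLinearMap ^ n))) :
    ∀ μ ∈ spectrum ℂ φ, μ ≠ 0 →
      ∃ (N F : Submodule ℂ H),
        (∀ x ∈ N, φ.toLinearMap x ∈ N) ∧ (∀ x ∈ F, φ.toLinearMap x ∈ F) ∧
        IsCompl N F ∧ FiniteDimensional ℂ N ∧ IsClosed (F : Set H) ∧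
        ∃ (hN : ∀ x ∈ N, (φ.toLinearMap - μ • 1) x ∈ N)
          (hF : ∀ x ∈ F, (φ.toLinearMap - μ • 1) x ∈ F),
          IsNilpotent ((φ.toLinearMap - μ • 1).restrict hN) ∧
          ∃ e : F ≃L[ℂ] F, ∀ x : F, e x = (φ.toLinearMap - μ • 1).restrict hF x := by
  intro μ _ hμ
  obtain ⟨n, hn⟩ := hfp
  set f := φ.toLinearMap
  set ψ := f - μ • 1
  have : FiniteDimensional ℂ (H ⧸ ker (f ^ n)) := (f ^ n).quotKerEquivRange.symm.finiteDimensional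
  obtain ⟨m, hm⟩ := eventuallyConst_atTop.mp
    ((Submodule.eventuallyConst_of_monotone_of_le ψ.iterateKer.monotone
      (Module.End.ker_pow_sub_smul_le_range_pow hμ.isUnit n)).prodMk
    (Submodule.eventuallyConst_of_antitone_of_ge ψ.iterateRange.monotone
      (Module.End.ker_pow_le_range_pow_sub_smul hμ.isUnit n)))
  have hker (k : ℕ) (hk : m ≤ k) : ker (ψ ^ k) = ker (ψ ^ m) := congrArg Prod.fst (hm k hk)
  have hrange (k : ℕ) (hk : m ≤ k) : range (ψ ^ k) = range (ψ ^ m) := congrArg Prod.snd (hm k hk)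
  have hclosed : IsClosed (range (ψ ^ m) : Set H) := by
    refine Submodule.isClosed_mono_of_finiteDimensional_quotient ?_
      (Module.End.ker_pow_le_range_pow_sub_smul hμ.isUnit n m)
    rw [← ContinuousLinearMap.toLinearMap_pow]
    exact (φ ^ n).isClosed_ker
  have hφ : Commute f (ψ ^ m) :=
    ((Commute.refl f).sub_right ((Commute.one_right f).smul_right μ)).pow_right m
  have hψN : ∀ x ∈ ker (ψ ^ m), ψ x ∈ ker (ψ ^ m) := fun _ =>
    Module.End.map_mem_ker_of_commute (Commute.self_pow ψ m)
  have hψF : ∀ x ∈ range (ψ ^ m), ψ x ∈ range (ψ ^ m) := fun _ =>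
    Module.End.map_mem_range_of_commute (Commute.self_pow ψ m)
  refine ⟨ker (ψ ^ m), range (ψ ^ m), fun _ => Module.End.map_mem_ker_of_commute hφ,
    fun _ => Module.End.map_mem_range_of_commute hφ,
    Module.End.isCompl_ker_pow_range_pow ψ hker hrange,
    Submodule.finiteDimensional_of_le (Module.End.ker_pow_sub_smul_le_range_pow hμ.isUnit n m),
    hclosed, hψN, hψF, Module.End.isNilpotent_restrict_ker_pow_s15 ψ m hψN,
    ψ.exists_continuousLinearEquiv_restrict (φ - μ • 1).continuous hclosed hψF
      (Module.End.bijective_restrict_range_pow_s15 ψ hker hrange hψF)⟩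
end

section
/- Let H be a Hilbert space and φ a bounded finite potent endomorphism. Then the adjoint φ* is also a bounded finite potent endomorphism. Moreover, W_φ^⊥ is φ*-invariant and (φ*)ⁿ vanishes on W_φ^⊥ where n = i(φ). -/
/-!
Since `φ` preserves `W` and is nilpotent of index `n` on the complement `U`, the range of `φⁿ`
lies in `W`. Taking orthogonal complements, `(φ*)ⁿ = (φⁿ)*` vanishes on `Wᗮ ⊆ (range φⁿ)ᗮ = ker (φⁿ)*`,
so the range of `(φ*)ⁿ` is the image of the finite-dimensional space `W`. The invariance of `Wᗮ`
under `φ*` is the adjoint of the invariance of `W` under `φ`.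
-/

theorem LinearMap.range_eq_map_of_codisjoint_ker {R M M' : Type*} [Semiring R]
    [AddCommMonoid M] [AddCommMonoid M'] [Module R M] [Module R M'] {T : M →ₗ[R] M'}
    {W : Submodule R M} (h : Codisjoint W (ker T)) : range T = W.map T := by
  rw [range_eq_map, ← h.eq_top, Submodule.map_sup, le_ker_iff_map.mp le_rfl, sup_bot_eq]

theorem Module.End.range_pow_le_of_restrict_pow_eq_zero {R M : Type*} [Semiring R]
    [AddCommMonoid M] [Module R M] {f : Module.End R M} {W U : Submodule R M}
    (hWU : Codisjoint W U) (hW : ∀ x ∈ W, f x ∈ W) (hU : ∀ x ∈ U, f x ∈ U) {n : ℕ}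
    (hn : (f.restrict hU) ^ n = 0) : LinearMap.range (f ^ n) ≤ W := by
  have hker : U ≤ LinearMap.ker (f ^ n) := fun u hu => by
    simpa [Module.End.pow_restrict n hU] using
      congrArg Subtype.val (LinearMap.congr_fun hn ⟨u, hu⟩)
  rw [LinearMap.range_eq_map_of_codisjoint_ker (hWU.mono_right hker),
    Submodule.map_le_iff_le_comap]
  exact fun w hw => Module.End.pow_apply_mem_of_forall_mem n hW w hw

theorem ContinuousLinearMap.adjoint_pow {𝕜 E : Type*} [RCLike 𝕜] [NormedAddCommGroup E]
    [InnerProductSpace 𝕜 E] [CompleteSpace E] (T : E →L[𝕜] E) (n : ℕ) :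
    adjoint T ^ n = adjoint (T ^ n) := by
  simp only [← star_eq_adjoint, star_pow]

theorem ContinuousLinearMap.adjoint_apply_eq_zero_of_range_le {𝕜 E F : Type*} [RCLike 𝕜]
    [NormedAddCommGroup E] [NormedAddCommGroup F] [InnerProductSpace 𝕜 E]
    [InnerProductSpace 𝕜 F] [CompleteSpace E] [CompleteSpace F] {T : E →L[𝕜] F}
    {W : Submodule 𝕜 F} (hT : LinearMap.range (T : E →ₗ[𝕜] F) ≤ W) {x : F} (hx : x ∈ Wᗮ) :
    adjoint T x = 0 := by
  have hx' := Submodule.orthogonal_le hT hx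
  rwa [orthogonal_range] at hx'

theorem adjoint_finite_potent_general {H : Type*} [NormedAddCommGroup H]
    [InnerProductSpace ℂ H] [CompleteSpace H]
    (φ : H →L[ℂ] H)
    (W U : Submodule ℂ H) (hWU : IsCompl W U) [FiniteDimensional ℂ W]
    (hW : ∀ x ∈ W, φ.toLinearMap x ∈ W) (hU : ∀ x ∈ U, φ.toLinearMap x ∈ U)
    (n : ℕ) (hn : (φ.toLinearMap.restrict hU) ^ n = 0) :
    (∃ m : ℕ, FiniteDimensional ℂ
      (LinearMap.range ((ContinuousLinearMap.adjoint φ).toLinearMap ^ m))) ∧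
    (∀ x ∈ Wᗮ, ContinuousLinearMap.adjoint φ x ∈ Wᗮ) ∧
    (∀ x ∈ Wᗮ, (ContinuousLinearMap.adjoint φ ^ n) x = 0) := by
  have hrange : LinearMap.range (φ ^ n).toLinearMap ≤ W := by
    rw [ContinuousLinearMap.toLinearMap_pow]
    exact Module.End.range_pow_le_of_restrict_pow_eq_zero hWU.codisjoint hW hU hn
  have hvanish : ∀ x ∈ Wᗮ, (ContinuousLinearMap.adjoint φ ^ n) x = 0 := fun x hx => by
    rw [ContinuousLinearMap.adjoint_pow]
    exact ContinuousLinearMap.adjoint_apply_eq_zero_of_range_le hrange hx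
  refine ⟨⟨n, ?_⟩, fun x hx => ?_, hvanish⟩
  · have hker : Wᗮ ≤ LinearMap.ker ((ContinuousLinearMap.adjoint φ).toLinearMap ^ n) := by
      rw [← ContinuousLinearMap.toLinearMap_pow]
      exact hvanish
    rw [LinearMap.range_eq_map_of_codisjoint_ker
      (W.isCompl_orthogonal.codisjoint.mono_right hker)]
    infer_instance
  · have hinv := ContinuousLinearMap.orthogonal_mem_invtSubmodule
      (T := ContinuousLinearMap.adjoint φ) (U := W) (by rwa [ContinuousLinearMap.adjoint_adjoint])
    exact ((Module.End.mem_invtSubmodule_iff_forall_mem_of_mem _).mp hinv) x hx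

/-- The adjoint of a bounded finite potent endomorphism `φ` is bounded finite potent;
moreover `W_φ^⊥` is `φ*`-invariant and `(φ*)ⁿ` vanishes on `W_φ^⊥`, where `n = i(φ)`
(so that `(φ|_{U_φ})ⁿ = 0`). -/
theorem adjoint_finite_potent {H : Type*} [NormedAddCommGroup H]
    [InnerProductSpace ℂ H] [CompleteSpace H]
    (φ : H →L[ℂ] H)
    (W U : Submodule ℂ H) (hWU : IsCompl W U) [FiniteDimensional ℂ W]
    (hW : ∀ x ∈ W, φ.toLinearMap x ∈ W) (hU : ∀ x ∈ U, φ.toLinearMap x ∈ U)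
    (hWa : Function.Bijective (φ.toLinearMap.restrict hW))
    (n : ℕ) (hn : (φ.toLinearMap.restrict hU) ^ n = 0) :
    (∃ m : ℕ, FiniteDimensional ℂ
      (LinearMap.range ((ContinuousLinearMap.adjoint φ).toLinearMap ^ m))) ∧
    (∀ x ∈ Wᗮ, ContinuousLinearMap.adjoint φ x ∈ Wᗮ) ∧
    (∀ x ∈ Wᗮ, (ContinuousLinearMap.adjoint φ ^ n) x = 0) :=
  adjoint_finite_potent_general φ W U hWU hW hU n hn
end

section
/- Let H be a Hilbert space, φ a bounded finite potent endomorphism with AST-decomposition H = W_φ ⊕ U_φ, and let H = W_{φ*} ⊕ U_{φ*} be the AST-decomposition of the adjoint φ*. Then U_{φ*} = W_φ^⊥ and W_{φ*} = U_φ^⊥; in particular dim W_{φ*} = dim W_φ and H = W_φ^⊥ ⊕ U_φ^⊥. -/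
/-!
If `n` is large enough that `φⁿ` kills `U` and `(φ*)ⁿ` kills `U'`, then `φⁿ` has range `W` and
`(φ*)ⁿ = (φⁿ)*` has kernel `U'`, so `U' = ker (φⁿ)* = (range φⁿ)ᗮ = Wᗮ`. Exchanging the roles of
`φ` and `φ*` gives `U = W'ᗮ`, hence `W' = Uᗮ` because the finite-dimensional `W'` is closed.
Finally `W` and `W'` are complements of the same subspace `U`, so they have the same dimension.
-/

open ContinuousLinearMap Filter

structure IsASTDecomposition {R M : Type*} [Semiring R] [AddCommMonoid M] [Module R M]
    (ψ : Module.End R M) (W U : Submodule R M) : Prop where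
  isCompl : IsCompl W U
  mapsTo_left : ∀ x ∈ W, ψ x ∈ W
  mapsTo_right : ∀ x ∈ U, ψ x ∈ U
  bijective_restrict_left : Function.Bijective (ψ.restrict mapsTo_left)
  isNilpotent_restrict_right : IsNilpotent (ψ.restrict mapsTo_right)

namespace IsASTDecomposition

variable {R M : Type*} [Ring R] [AddCommGroup M] [Module R M]
  {ψ : Module.End R M} {W U : Submodule R M}

theorem bijective_restrict_pow_left (h : IsASTDecomposition ψ W U) (n : ℕ) :
    Function.Bijective
      ((ψ ^ n).restrict (Module.End.pow_apply_mem_of_forall_mem n h.mapsTo_left)) := by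
  rw [← Module.End.pow_restrict, Module.End.coe_pow]
  exact h.bijective_restrict_left.iterate n

theorem le_ker_pow (h : IsASTDecomposition ψ W U) {n : ℕ}
    (hn : ψ.restrict h.mapsTo_right ^ n = 0) : U ≤ LinearMap.ker (ψ ^ n) := by
  intro x hx
  rw [Module.End.pow_restrict] at hn
  simpa using congr_arg Subtype.val (LinearMap.congr_fun hn ⟨x, hx⟩)

theorem ker_pow (h : IsASTDecomposition ψ W U) {n : ℕ}
    (hn : ψ.restrict h.mapsTo_right ^ n = 0) : LinearMap.ker (ψ ^ n) = U := by
  have hdisj : Disjoint W (LinearMap.ker (ψ ^ n)) :=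
    (LinearMap.injective_restrict_iff _).mp (h.bijective_restrict_pow_left n).injective
  refine (eq_of_le_of_inf_le_of_le_sup (z := W) (h.le_ker_pow hn) ?_ ?_).symm
  · exact (disjoint_iff.mp hdisj.symm).trans_le bot_le
  · rw [h.isCompl.symm.sup_eq_top]
    exact le_top

theorem range_pow (h : IsASTDecomposition ψ W U) {n : ℕ}
    (hn : ψ.restrict h.mapsTo_right ^ n = 0) : LinearMap.range (ψ ^ n) = W := by
  have hmap : W.map (ψ ^ n) = W := by
    refine le_antisymm (Submodule.map_le_iff_le_comap.mpr
      (Module.End.pow_apply_mem_of_forall_mem n h.mapsTo_left)) ?_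
    have := LinearMap.range_eq_top.mpr (h.bijective_restrict_pow_left n).surjective
    rwa [LinearMap.range_restrict, Submodule.comap_subtype_eq_top] at this
  rw [LinearMap.range_eq_map, ← h.isCompl.sup_eq_top, Submodule.map_sup, hmap,
    LinearMap.le_ker_iff_map.mp (h.le_ker_pow hn), sup_bot_eq]

theorem eventually_restrict_right_pow_eq_zero (h : IsASTDecomposition ψ W U) :
    ∀ᶠ n in atTop, ψ.restrict h.mapsTo_right ^ n = 0 := by
  obtain ⟨n, hn⟩ := h.isNilpotent_restrict_right
  exact eventually_atTop.mpr ⟨n, fun m hm => pow_eq_zero_of_le hm hn⟩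

end IsASTDecomposition

theorem IsASTDecomposition.adjoint_right_eq_orthogonal_left {H : Type*} [NormedAddCommGroup H]
    [InnerProductSpace ℂ H] [CompleteSpace H] {φ : H →L[ℂ] H} {W U W' U' : Submodule ℂ H}
    (h : IsASTDecomposition φ.toLinearMap W U)
    (h' : IsASTDecomposition (adjoint φ).toLinearMap W' U') : U' = Wᗮ := by
  obtain ⟨n, hn, hn'⟩ := (h.eventually_restrict_right_pow_eq_zero.and
    h'.eventually_restrict_right_pow_eq_zero).exists
  rw [← h.range_pow hn, ← h'.ker_pow hn', ← toLinearMap_pow, ← toLinearMap_pow,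
    ← star_eq_adjoint, ← star_pow, star_eq_adjoint, ← orthogonal_range]

theorem Submodule.finrank_eq_of_isCompl_of_isCompl {R M : Type*} [Ring R] [AddCommGroup M]
    [Module R M] {p q q' : Submodule R M} (hq : IsCompl p q) (hq' : IsCompl p q') :
    Module.finrank R q = Module.finrank R q' :=
  ((p.quotientEquivOfIsCompl q hq).symm.trans (p.quotientEquivOfIsCompl q' hq')).finrank_eq

theorem adjoint_AST_decomposition_general {H : Type*} [NormedAddCommGroup H]
    [InnerProductSpace ℂ H] [CompleteSpace H]
    (φ : H →L[ℂ] H)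
    (W U : Submodule ℂ H) (hWU : IsCompl W U)
    (hW : ∀ x ∈ W, φ.toLinearMap x ∈ W) (hU : ∀ x ∈ U, φ.toLinearMap x ∈ U)
    (hWa : Function.Bijective (φ.toLinearMap.restrict hW))
    (hUn : IsNilpotent (φ.toLinearMap.restrict hU))
    (W' U' : Submodule ℂ H) (hWU' : IsCompl W' U') [FiniteDimensional ℂ W']
    (hW' : ∀ x ∈ W', (ContinuousLinearMap.adjoint φ).toLinearMap x ∈ W')
    (hU' : ∀ x ∈ U', (ContinuousLinearMap.adjoint φ).toLinearMap x ∈ U')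
    (hWa' : Function.Bijective ((ContinuousLinearMap.adjoint φ).toLinearMap.restrict hW'))
    (hUn' : IsNilpotent ((ContinuousLinearMap.adjoint φ).toLinearMap.restrict hU')) :
    U' = Wᗮ ∧ W' = Uᗮ ∧ Module.finrank ℂ W' = Module.finrank ℂ W ∧
    IsCompl Wᗮ Uᗮ := by
  have hφ : IsASTDecomposition φ.toLinearMap W U := ⟨hWU, hW, hU, hWa, hUn⟩
  have hφ' : IsASTDecomposition (adjoint φ).toLinearMap W' U' := ⟨hWU', hW', hU', hWa', hUn'⟩
  have hU'_eq : U' = Wᗮ := hφ.adjoint_right_eq_orthogonal_left hφ'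
  have hU_eq : U = W'ᗮ :=
    hφ'.adjoint_right_eq_orthogonal_left ((adjoint_adjoint φ).symm ▸ hφ)
  have hW'_eq : W' = Uᗮ := by rw [hU_eq, Submodule.orthogonal_orthogonal]
  refine ⟨hU'_eq, hW'_eq, ?_, hU'_eq ▸ hW'_eq ▸ hWU'.symm⟩
  exact Submodule.finrank_eq_of_isCompl_of_isCompl (hU_eq ▸ W'.isCompl_orthogonal.symm) hWU.symm

/-- If `H = W ⊕ U` is the AST-decomposition of a bounded finite potent `φ` and
`H = W' ⊕ U'` that of its adjoint `φ*`, then `U' = Wᗮ`, `W' = Uᗮ`,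
`dim W' = dim W` and `H = Wᗮ ⊕ Uᗮ`. -/
theorem adjoint_AST_decomposition {H : Type*} [NormedAddCommGroup H]
    [InnerProductSpace ℂ H] [CompleteSpace H]
    (φ : H →L[ℂ] H)
    (W U : Submodule ℂ H) (hWU : IsCompl W U) [FiniteDimensional ℂ W]
    (hW : ∀ x ∈ W, φ.toLinearMap x ∈ W) (hU : ∀ x ∈ U, φ.toLinearMap x ∈ U)
    (hWa : Function.Bijective (φ.toLinearMap.restrict hW))
    (hUn : IsNilpotent (φ.toLinearMap.restrict hU))
    (W' U' : Submodule ℂ H) (hWU' : IsCompl W' U') [FiniteDimensional ℂ W']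
    (hW' : ∀ x ∈ W', (ContinuousLinearMap.adjoint φ).toLinearMap x ∈ W')
    (hU' : ∀ x ∈ U', (ContinuousLinearMap.adjoint φ).toLinearMap x ∈ U')
    (hWa' : Function.Bijective ((ContinuousLinearMap.adjoint φ).toLinearMap.restrict hW'))
    (hUn' : IsNilpotent ((ContinuousLinearMap.adjoint φ).toLinearMap.restrict hU')) :
    U' = Wᗮ ∧ W' = Uᗮ ∧ Module.finrank ℂ W' = Module.finrank ℂ W ∧
    IsCompl Wᗮ Uᗮ :=
  adjoint_AST_decomposition_general φ W U hWU hW hU hWa hUn W' U' hWU' hW' hU' hWa' hUn'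
end

section
/- Let H be a Hilbert space, φ a bounded finite potent endomorphism with core-nilpotent decomposition φ = φ₁ + φ₂, and let φ* = (φ*)₁ + (φ*)₂ be the core-nilpotent decomposition of the adjoint φ*. Then (φ*)₁ = (φ₁)* and (φ*)₂ = (φ₂)*. -/
/-!
On the core `W` the map `φ` is onto, so every `w ∈ W` is `φ ^ n w₀`, while `(φ*) ^ n` kills `U'`
for `n` large; hence `⟪w, u'⟫ = ⟪w₀, (φ*) ^ n u'⟫ = 0`, i.e. `W ⟂ U'`, and symmetrically `W' ⟂ U`.
Splitting `x = w' + u'` along `W' ⊕ U'` and `y = w + u` along `W ⊕ U`, these orthogonality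
relations kill the cross terms, and both `⟪ψ₁ x, y⟫` and `⟪x, φ₁ y⟫` reduce to `⟪w', φ w⟫`;
the nilpotent parts are handled in the same way with the roles of the summands exchanged.
-/

open Submodule
open scoped InnerProductSpace

namespace Module.End

variable {R M : Type*} [Semiring R] [AddCommMonoid M] [Module R M] {f : Module.End R M}
  {p : Submodule R M}

theorem exists_pow_apply_eq_of_surjective_restrict (hp : ∀ x ∈ p, f x ∈ p)
    (hf : Function.Surjective (f.restrict hp)) (n : ℕ) {x : M} (hx : x ∈ p) :
    ∃ y, (f ^ n) y = x := by
  obtain ⟨y, hy⟩ := (hf.iterate n) ⟨x, hx⟩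
  rw [← Module.End.pow_apply, Module.End.pow_restrict] at hy
  exact ⟨y, congr_arg Subtype.val hy⟩

theorem exists_pow_apply_eq_zero_of_isNilpotent_restrict (hp : ∀ x ∈ p, f x ∈ p)
    (hf : IsNilpotent (f.restrict hp)) : ∃ n : ℕ, ∀ x ∈ p, (f ^ n) x = 0 := by
  obtain ⟨n, hn⟩ := hf
  refine ⟨n, fun x hx ↦ ?_⟩
  rw [Module.End.pow_restrict] at hn
  exact congr_arg Subtype.val (LinearMap.congr_fun hn ⟨x, hx⟩)

end Module.End

section InnerProductSpace

variable {𝕜 E : Type*} [RCLike 𝕜] [NormedAddCommGroup E] [InnerProductSpace 𝕜 E]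
  {f g : E →ₗ[𝕜] E}

theorem inner_pow_apply_eq_of_inner_apply_eq (hfg : ∀ x y, ⟪f x, y⟫_𝕜 = ⟪x, g y⟫_𝕜)
    (n : ℕ) (x y : E) : ⟪(f ^ n) x, y⟫_𝕜 = ⟪x, (g ^ n) y⟫_𝕜 := by
  induction n generalizing x with
  | zero => rfl
  | succ n ih => rw [pow_succ, Module.End.mul_apply, ih, hfg, ← Module.End.mul_apply, ← pow_succ']

theorem isOrtho_of_surjective_restrict_of_isNilpotent_restrict
    (hfg : ∀ x y, ⟪f x, y⟫_𝕜 = ⟪x, g y⟫_𝕜) {V U : Submodule 𝕜 E}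
    (hV : ∀ x ∈ V, f x ∈ V) (hf : Function.Surjective (f.restrict hV))
    (hU : ∀ x ∈ U, g x ∈ U) (hg : IsNilpotent (g.restrict hU)) : V ⟂ U := by
  obtain ⟨n, hn⟩ := Module.End.exists_pow_apply_eq_zero_of_isNilpotent_restrict hU hg
  refine isOrtho_iff_inner_eq.2 fun v hv u hu ↦ ?_
  obtain ⟨w, rfl⟩ := Module.End.exists_pow_apply_eq_of_surjective_restrict hV hf n hv
  rw [inner_pow_apply_eq_of_inner_apply_eq hfg, hn u hu, inner_zero_right]

theorem inner_apply_eq_of_isOrtho_of_codisjoint (hgf : ∀ x y, ⟪g x, y⟫_𝕜 = ⟪x, f y⟫_𝕜)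
    {V U V' U' : Submodule 𝕜 E} (hVU : Codisjoint V U) (hVU' : Codisjoint V' U')
    (hV : ∀ x ∈ V, f x ∈ V) (hU : ∀ x ∈ U, f x ∈ U) (hV_U' : V ⟂ U') (hV'_U : V' ⟂ U)
    {p q : E →ₗ[𝕜] E} (hpV : ∀ v ∈ V, p v = f v) (hpU : ∀ u ∈ U, p u = 0)
    (hqV' : ∀ v ∈ V', q v = g v) (hqU' : ∀ u ∈ U', q u = 0) (x y : E) :
    ⟪q x, y⟫_𝕜 = ⟪x, p y⟫_𝕜 := by
  obtain ⟨v', hv', u', hu', rfl⟩ := mem_sup.1 (hVU'.eq_top ▸ mem_top : x ∈ V' ⊔ U')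
  obtain ⟨v, hv, u, hu, rfl⟩ := mem_sup.1 (hVU.eq_top ▸ mem_top : y ∈ V ⊔ U)
  have hq : q (v' + u') = g v' := by rw [map_add, hqV' v' hv', hqU' u' hu', add_zero]
  have hp : p (v + u) = f v := by rw [map_add, hpV v hv, hpU u hu, add_zero]
  calc ⟪q (v' + u'), v + u⟫_𝕜 = ⟪v', f v + f u⟫_𝕜 := by rw [hq, hgf, map_add]
    _ = ⟪v', f v⟫_𝕜 := by rw [inner_add_right, hV'_U.inner_eq hv' (hU u hu), add_zero]
    _ = ⟪v' + u', f v⟫_𝕜 := by rw [inner_add_left, hV_U'.symm.inner_eq hu' (hV v hv), add_zero]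
    _ = ⟪v' + u', p (v + u)⟫_𝕜 := by rw [hp]

end InnerProductSpace

/-- `ψᵢ = (φᵢ)*` is expressed through the inner product, since `φᵢ` is a priori only linear. -/
theorem adjoint_core_nilpotent_parts_general {H : Type*} [NormedAddCommGroup H]
    [InnerProductSpace ℂ H] [CompleteSpace H]
    (φ : H →L[ℂ] H)
    (W U : Submodule ℂ H) (hWU : IsCompl W U)
    (hW : ∀ x ∈ W, φ.toLinearMap x ∈ W) (hU : ∀ x ∈ U, φ.toLinearMap x ∈ U)
    (hWa : Function.Bijective (φ.toLinearMap.restrict hW))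
    (hUn : IsNilpotent (φ.toLinearMap.restrict hU))
    (W' U' : Submodule ℂ H) (hWU' : IsCompl W' U')
    (hW' : ∀ x ∈ W', (ContinuousLinearMap.adjoint φ).toLinearMap x ∈ W')
    (hU' : ∀ x ∈ U', (ContinuousLinearMap.adjoint φ).toLinearMap x ∈ U')
    (hWa' : Function.Bijective ((ContinuousLinearMap.adjoint φ).toLinearMap.restrict hW'))
    (hUn' : IsNilpotent ((ContinuousLinearMap.adjoint φ).toLinearMap.restrict hU'))
    -- core-nilpotent decomposition of `φ`
    (φ₁ φ₂ : H →ₗ[ℂ] H)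
    (hφ₁W : ∀ v ∈ W, φ₁ v = φ v) (hφ₁U : ∀ v ∈ U, φ₁ v = 0)
    (hφ₂W : ∀ v ∈ W, φ₂ v = 0) (hφ₂U : ∀ v ∈ U, φ₂ v = φ v)
    -- core-nilpotent decomposition of `φ*`
    (ψ₁ ψ₂ : H →ₗ[ℂ] H)
    (hψ₁W : ∀ v ∈ W', ψ₁ v = ContinuousLinearMap.adjoint φ v)
    (hψ₁U : ∀ v ∈ U', ψ₁ v = 0)
    (hψ₂W : ∀ v ∈ W', ψ₂ v = 0)
    (hψ₂U : ∀ v ∈ U', ψ₂ v = ContinuousLinearMap.adjoint φ v) :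
    (∀ x y : H, (inner ℂ (ψ₁ x) y : ℂ) = inner ℂ x (φ₁ y)) ∧
    (∀ x y : H, (inner ℂ (ψ₂ x) y : ℂ) = inner ℂ x (φ₂ y)) := by
  have hφφ' : ∀ x y, ⟪φ x, y⟫_ℂ = ⟪x, φ.adjoint y⟫_ℂ := fun x y ↦
    (φ.adjoint_inner_right x y).symm
  have hφ'φ : ∀ x y, ⟪φ.adjoint x, y⟫_ℂ = ⟪x, φ y⟫_ℂ := fun x y ↦
    φ.adjoint_inner_left y x
  have hW_U' : W ⟂ U' :=
    isOrtho_of_surjective_restrict_of_isNilpotent_restrict hφφ' hW hWa.2 hU' hUn'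
  have hW'_U : W' ⟂ U :=
    isOrtho_of_surjective_restrict_of_isNilpotent_restrict hφ'φ hW' hWa'.2 hU hUn
  exact ⟨inner_apply_eq_of_isOrtho_of_codisjoint hφ'φ hWU.codisjoint hWU'.codisjoint hW hU
      hW_U' hW'_U hφ₁W hφ₁U hψ₁W hψ₁U,
    inner_apply_eq_of_isOrtho_of_codisjoint hφ'φ hWU.codisjoint.symm hWU'.codisjoint.symm hU hW
      hW'_U.symm hW_U'.symm hφ₂U hφ₂W hψ₂U hψ₂W⟩

/-- If `φ = φ₁ + φ₂` is the core-nilpotent decomposition of a bounded finite potent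
`φ` and `φ* = ψ₁ + ψ₂` that of its adjoint, then `ψ₁ = (φ₁)*` and `ψ₂ = (φ₂)*`
(expressed via the inner product, since `φ₁`, `φ₂` are a priori only linear). -/
theorem adjoint_core_nilpotent_parts {H : Type*} [NormedAddCommGroup H]
    [InnerProductSpace ℂ H] [CompleteSpace H]
    (φ : H →L[ℂ] H)
    (W U : Submodule ℂ H) (hWU : IsCompl W U) [FiniteDimensional ℂ W]
    (hW : ∀ x ∈ W, φ.toLinearMap x ∈ W) (hU : ∀ x ∈ U, φ.toLinearMap x ∈ U)
    (hWa : Function.Bijective (φ.toLinearMap.restrict hW))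
    (hUn : IsNilpotent (φ.toLinearMap.restrict hU))
    (W' U' : Submodule ℂ H) (hWU' : IsCompl W' U') [FiniteDimensional ℂ W']
    (hW' : ∀ x ∈ W', (ContinuousLinearMap.adjoint φ).toLinearMap x ∈ W')
    (hU' : ∀ x ∈ U', (ContinuousLinearMap.adjoint φ).toLinearMap x ∈ U')
    (hWa' : Function.Bijective ((ContinuousLinearMap.adjoint φ).toLinearMap.restrict hW'))
    (hUn' : IsNilpotent ((ContinuousLinearMap.adjoint φ).toLinearMap.restrict hU'))
    -- core-nilpotent decomposition of `φ`
    (φ₁ φ₂ : H →ₗ[ℂ] H)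
    (hφ₁W : ∀ v ∈ W, φ₁ v = φ v) (hφ₁U : ∀ v ∈ U, φ₁ v = 0)
    (hφ₂W : ∀ v ∈ W, φ₂ v = 0) (hφ₂U : ∀ v ∈ U, φ₂ v = φ v)
    -- core-nilpotent decomposition of `φ*`
    (ψ₁ ψ₂ : H →ₗ[ℂ] H)
    (hψ₁W : ∀ v ∈ W', ψ₁ v = ContinuousLinearMap.adjoint φ v)
    (hψ₁U : ∀ v ∈ U', ψ₁ v = 0)
    (hψ₂W : ∀ v ∈ W', ψ₂ v = 0)
    (hψ₂U : ∀ v ∈ U', ψ₂ v = ContinuousLinearMap.adjoint φ v) :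
    (∀ x y : H, (inner ℂ (ψ₁ x) y : ℂ) = inner ℂ x (φ₁ y)) ∧
    (∀ x y : H, (inner ℂ (ψ₂ x) y : ℂ) = inner ℂ x (φ₂ y)) :=
  adjoint_core_nilpotent_parts_general φ W U hWU hW hU hWa hUn W' U' hWU' hW' hU' hWa' hUn' φ₁ φ₂
    hφ₁W hφ₁U hφ₂W hφ₂U ψ₁ ψ₂ hψ₁W hψ₁U hψ₂W hψ₂U
end
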